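/- With F as above, the symmetric part satisfies xᵀ F x = −x₂ᵀ R_c1 x₂ − (x₂+x₄)ᵀ R_c2 (x₂+x₄) for every x = (x₁,x₂,x₃,x₄) with x₁∈ℝⁿ, x₂∈ℝᵐ, x₃∈ℝˢ, x₄∈ℝᵐ. In particular, if R_c1 > 0 and R_c2 > 0, then xᵀFx = 0 implies x₂ = 0 and x₄ = 0. -/

import Mathlib

/-!
Expanding `xᵀ F x` block by block, every off-diagonal coupling through `S1`, `S2` or `S32`
occurs once with each sign and cancels by `y ⬝ᵥ Aᵀ *ᵥ x = x ⬝ᵥ A *ᵥ y`, the skew blocks `Jc1`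
and `S34` contribute nothing, and the remaining `Rc1`, `Rc2` terms assemble into
`-x₂ᵀ Rc1 x₂ - (x₂ + x₄)ᵀ Rc2 (x₂ + x₄)`. With both damping matrices positive definite this is
a sum of two nonpositive terms, so it vanishes only if `x₂ = 0` and `x₂ + x₄ = 0`.
-/

open Matrix

namespace Matrix

variable {ι R : Type*} [Fintype ι]

theorem dotProduct_mulVec_self_eq_zero_of_transpose_eq_neg [CommRing R] [NoZeroDivisors R]
    [CharZero R] {J : Matrix ι ι R} (hJ : Jᵀ = -J) (x : ι → R) : x ⬝ᵥ J *ᵥ x = 0 := by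
  have h := dotProduct_transpose_mulVec J x x
  rw [hJ, neg_mulVec, dotProduct_neg] at h
  exact self_eq_neg.mp h.symm

theorem PosDef.dotProduct_mulVec_self_eq_zero_iff {A : Matrix ι ι ℝ} (hA : A.PosDef)
    {x : ι → ℝ} : x ⬝ᵥ A *ᵥ x = 0 ↔ x = 0 := by
  refine ⟨fun h => ?_, fun h => by simp [h]⟩
  by_contra hx
  simpa [h] using hA.dotProduct_mulVec_pos hx

end Matrix

section ClosedLoop

variable {ι₁ ι₂ ι₃ R : Type*} [Fintype ι₁] [Fintype ι₂] [Fintype ι₃]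

/-- The 4 × 4 block matrix `F`, written as a 2 × 2 block matrix of 2 × 2 blocks indexed by
`((x₁, x₂), (x₃, x₄))`. -/
def closedLoopMatrix [Ring R] (S1 : Matrix ι₁ ι₂ R) (S2 : Matrix ι₁ ι₃ R)
    (S32 : Matrix ι₂ ι₃ R) (S34 : Matrix ι₃ ι₃ R) (Jc1 Rc1 Rc2 : Matrix ι₂ ι₂ R) :
    Matrix ((ι₁ ⊕ ι₂) ⊕ (ι₃ ⊕ ι₂)) ((ι₁ ⊕ ι₂) ⊕ (ι₃ ⊕ ι₂)) R :=
  fromBlocks (fromBlocks 0 S1 (-S1ᵀ) (Jc1 - Rc1 - Rc2)) (fromBlocks S2 S1 S32 (-Rc2))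
    (fromBlocks (-S2ᵀ) (-S32ᵀ) (-S1ᵀ) (-Rc2)) (fromBlocks S34 (-S32ᵀ) S32 (-Rc2))

theorem dotProduct_closedLoopMatrix_mulVec [CommRing R] [NoZeroDivisors R] [CharZero R]
    (S1 : Matrix ι₁ ι₂ R) (S2 : Matrix ι₁ ι₃ R) (S32 : Matrix ι₂ ι₃ R) {S34 : Matrix ι₃ ι₃ R}
    {Jc1 : Matrix ι₂ ι₂ R} (Rc1 Rc2 : Matrix ι₂ ι₂ R) (hJc1 : Jc1ᵀ = -Jc1) (hS34 : S34ᵀ = -S34)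
    (x1 : ι₁ → R) (x2 : ι₂ → R) (x3 : ι₃ → R) (x4 : ι₂ → R) :
    (x1 ⊕ᵥ x2 ⊕ᵥ (x3 ⊕ᵥ x4)) ⬝ᵥ
        closedLoopMatrix S1 S2 S32 S34 Jc1 Rc1 Rc2 *ᵥ (x1 ⊕ᵥ x2 ⊕ᵥ (x3 ⊕ᵥ x4)) =
      -(x2 ⬝ᵥ Rc1 *ᵥ x2) - (x2 + x4) ⬝ᵥ Rc2 *ᵥ (x2 + x4) := by
  simp only [closedLoopMatrix, fromBlocks_mulVec, sumElim_dotProduct_sumElim, sub_mulVec,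
    neg_mulVec, zero_mulVec, mulVec_add, dotProduct_add, add_dotProduct, dotProduct_neg,
    dotProduct_sub, zero_add, Sum.elim_comp_inl, Sum.elim_comp_inr,
    dotProduct_mulVec_self_eq_zero_of_transpose_eq_neg hJc1,
    dotProduct_mulVec_self_eq_zero_of_transpose_eq_neg hS34, dotProduct_transpose_mulVec]
  ring

theorem eq_zero_of_dotProduct_closedLoopMatrix_mulVec_eq_zero {S1 : Matrix ι₁ ι₂ ℝ}
    {S2 : Matrix ι₁ ι₃ ℝ} {S32 : Matrix ι₂ ι₃ ℝ} {S34 : Matrix ι₃ ι₃ ℝ}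
    {Jc1 Rc1 Rc2 : Matrix ι₂ ι₂ ℝ} (hJc1 : Jc1ᵀ = -Jc1) (hS34 : S34ᵀ = -S34)
    (hRc1 : Rc1.PosDef) (hRc2 : Rc2.PosDef) {x1 : ι₁ → ℝ} {x2 : ι₂ → ℝ} {x3 : ι₃ → ℝ}
    {x4 : ι₂ → ℝ}
    (hx : (x1 ⊕ᵥ x2 ⊕ᵥ (x3 ⊕ᵥ x4)) ⬝ᵥ
      closedLoopMatrix S1 S2 S32 S34 Jc1 Rc1 Rc2 *ᵥ (x1 ⊕ᵥ x2 ⊕ᵥ (x3 ⊕ᵥ x4)) = 0) :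
    x2 = 0 ∧ x4 = 0 := by
  rw [dotProduct_closedLoopMatrix_mulVec S1 S2 S32 Rc1 Rc2 hJc1 hS34] at hx
  have h1 := hRc1.posSemidef.dotProduct_mulVec_nonneg x2
  have h2 := hRc2.posSemidef.dotProduct_mulVec_nonneg (x2 + x4)
  simp only [star_trivial] at h1 h2
  have hx2 : x2 = 0 := hRc1.dotProduct_mulVec_self_eq_zero_iff.mp (by linarith)
  have hx24 : x2 + x4 = 0 := hRc2.dotProduct_mulVec_self_eq_zero_iff.mp (by linarith)
  exact ⟨hx2, by simpa [hx2] using hx24⟩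

end ClosedLoop

theorem stmt7_general (n m s : ℕ)
    (S1 : Matrix (Fin n) (Fin m) ℝ) (S2 : Matrix (Fin n) (Fin s) ℝ)
    (S32 : Matrix (Fin m) (Fin s) ℝ) (S34 : Matrix (Fin s) (Fin s) ℝ)
    (Jc1 Rc1 Rc2 : Matrix (Fin m) (Fin m) ℝ)
    (hJc1 : Jc1.transpose = -Jc1) (hS34 : S34.transpose = -S34) :
    let F : Matrix ((Fin n ⊕ Fin m) ⊕ (Fin s ⊕ Fin m))
        ((Fin n ⊕ Fin m) ⊕ (Fin s ⊕ Fin m)) ℝ :=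
      Matrix.fromBlocks
        (Matrix.fromBlocks 0 S1 (-S1.transpose) (Jc1 - Rc1 - Rc2))
        (Matrix.fromBlocks S2 S1 S32 (-Rc2))
        (Matrix.fromBlocks (-S2.transpose) (-S32.transpose)
          (-S1.transpose) (-Rc2))
        (Matrix.fromBlocks S34 (-S32.transpose) S32 (-Rc2))
    (∀ (x1 : Fin n → ℝ) (x2 : Fin m → ℝ) (x3 : Fin s → ℝ) (x4 : Fin m → ℝ),
        (Sum.elim (Sum.elim x1 x2) (Sum.elim x3 x4)) ⬝ᵥ
            F.mulVec (Sum.elim (Sum.elim x1 x2) (Sum.elim x3 x4)) =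
          -(x2 ⬝ᵥ Rc1.mulVec x2) - ((x2 + x4) ⬝ᵥ Rc2.mulVec (x2 + x4))) ∧
      (Rc1.PosDef → Rc2.PosDef →
        ∀ (x1 : Fin n → ℝ) (x2 : Fin m → ℝ) (x3 : Fin s → ℝ) (x4 : Fin m → ℝ),
          (Sum.elim (Sum.elim x1 x2) (Sum.elim x3 x4)) ⬝ᵥ
              F.mulVec (Sum.elim (Sum.elim x1 x2) (Sum.elim x3 x4)) = 0 →
            x2 = 0 ∧ x4 = 0) :=
  ⟨fun _ _ _ _ => dotProduct_closedLoopMatrix_mulVec S1 S2 S32 Rc1 Rc2 hJc1 hS34 _ _ _ _,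
    fun hRc1 hRc2 _ _ _ _ hx =>
      eq_zero_of_dotProduct_closedLoopMatrix_mulVec_eq_zero hJc1 hS34 hRc1 hRc2 hx⟩

/-- With `F` the closed-loop structure matrix, for every
`x = (x₁,x₂,x₃,x₄)` one has
`xᵀ F x = −x₂ᵀ R_c1 x₂ − (x₂+x₄)ᵀ R_c2 (x₂+x₄)`; in particular, if
`R_c1 > 0` and `R_c2 > 0`, then `xᵀ F x = 0` implies `x₂ = 0` and `x₄ = 0`. -/
theorem stmt7 (n m s : ℕ)
    (S1 : Matrix (Fin n) (Fin m) ℝ) (S2 : Matrix (Fin n) (Fin s) ℝ)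
    (S32 : Matrix (Fin m) (Fin s) ℝ) (S34 : Matrix (Fin s) (Fin s) ℝ)
    (Jc1 Rc1 Rc2 : Matrix (Fin m) (Fin m) ℝ)
    (hJc1 : Jc1.transpose = -Jc1) (hS34 : S34.transpose = -S34)
    (hRc1 : Rc1.transpose = Rc1) (hRc2 : Rc2.transpose = Rc2) :
    let F : Matrix ((Fin n ⊕ Fin m) ⊕ (Fin s ⊕ Fin m))
        ((Fin n ⊕ Fin m) ⊕ (Fin s ⊕ Fin m)) ℝ :=
      Matrix.fromBlocks
        (Matrix.fromBlocks 0 S1 (-S1.transpose) (Jc1 - Rc1 - Rc2))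
        (Matrix.fromBlocks S2 S1 S32 (-Rc2))
        (Matrix.fromBlocks (-S2.transpose) (-S32.transpose)
          (-S1.transpose) (-Rc2))
        (Matrix.fromBlocks S34 (-S32.transpose) S32 (-Rc2))
    (∀ (x1 : Fin n → ℝ) (x2 : Fin m → ℝ) (x3 : Fin s → ℝ) (x4 : Fin m → ℝ),
        (Sum.elim (Sum.elim x1 x2) (Sum.elim x3 x4)) ⬝ᵥ
            F.mulVec (Sum.elim (Sum.elim x1 x2) (Sum.elim x3 x4)) =
          -(x2 ⬝ᵥ Rc1.mulVec x2) - ((x2 + x4) ⬝ᵥ Rc2.mulVec (x2 + x4))) ∧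
      (Rc1.PosDef → Rc2.PosDef →
        ∀ (x1 : Fin n → ℝ) (x2 : Fin m → ℝ) (x3 : Fin s → ℝ) (x4 : Fin m → ℝ),
          (Sum.elim (Sum.elim x1 x2) (Sum.elim x3 x4)) ⬝ᵥ
              F.mulVec (Sum.elim (Sum.elim x1 x2) (Sum.elim x3 x4)) = 0 →
            x2 = 0 ∧ x4 = 0) :=
  stmt7_general n m s S1 S2 S32 S34 Jc1 Rc1 Rc2 hJc1 hS34
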